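/- Define β_μ : ℝ × ℝ → ℝ and β_λ : ℝ → ℝ by β_μ(m, l) = −3m + 4m·(m/(2π) − 4l) and β_λ(l) = −4l + 8l². Then the set of solutions (m, l) of β_μ(m, l) = 0 and β_λ(l) = 0 is exactly { (0, 0), (11π/2, 1/2), (3π/2, 0), (0, 1/2) }. -/
import Mathlib


open Real

/-- One-loop β-function of the local quartic coupling for the `p = 2` model. -/
noncomputable def betaMu (m l : ℝ) : ℝ := -3 * m + 4 * m * (m / (2 * π) - 4 * l)

/-- One-loop β-function of the non-local disorder coupling for the `p = 2` model. -/
noncomputable def betaLambda (l : ℝ) : ℝ := -4 * l + 8 * l ^ 2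

/-- The simultaneous zeros of the one-loop β-functions of the `p = 2` model are
exactly the Gaussian fixed point and the three non-Gaussian fixed points
FP1 = (11π/2, 1/2), FP2 = (3π/2, 0), FP3 = (0, 1/2). -/
theorem p2_fixed_points :
    {p : ℝ × ℝ | betaMu p.1 p.2 = 0 ∧ betaLambda p.2 = 0} =
      {((0 : ℝ), (0 : ℝ)), (11 * π / 2, 1 / 2), (3 * π / 2, 0), (0, 1 / 2)} := by
  have hπ : (π : ℝ) ≠ 0 := pi_ne_zero
  ext ⟨m, l⟩
  simp only [Set.mem_setOf_eq, Set.mem_insert_iff, Set.mem_singleton_iff, Prod.mk.injEq,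
    betaMu, betaLambda]
  constructor
  · rintro ⟨h1, h2⟩
    have hl : l = 0 ∨ l = 1 / 2 := by
      have : (4 * l) * (2 * l - 1) = 0 := by nlinarith [h2]
      rcases mul_eq_zero.mp this with h | h
      · left; linarith
      · right; linarith
    have key : -3 * m + 4 * m * (m / (2 * π) - 4 * l)
        = (2 * m * (2 * m - 3 * π - 16 * π * l)) / (2 * π) := by
      field_simp; ring
    rw [key] at h1
    have h1' := (div_eq_zero_iff.mp h1).resolve_right (by positivity)
    rcases mul_eq_zero.mp h1' with hm | hm
    · have hm0 : m = 0 := by linarith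
      rcases hl with hl | hl
      · exact Or.inl ⟨hm0, hl⟩
      · exact Or.inr (Or.inr (Or.inr ⟨hm0, hl⟩))
    · rcases hl with hl | hl
      · subst hl
        exact Or.inr (Or.inr (Or.inl ⟨by linarith, rfl⟩))
      · subst hl
        exact Or.inr (Or.inl ⟨by linarith, rfl⟩)
  · rintro (⟨hm, hl⟩ | ⟨hm, hl⟩ | ⟨hm, hl⟩ | ⟨hm, hl⟩) <;> subst hm <;> subst hl <;>
      refine ⟨?_, by ring⟩
    · ring
    · rw [show (11 * π / 2) / (2 * π) = 11 / 4 by field_simp; ring]; ring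
    · rw [show (3 * π / 2) / (2 * π) = 3 / 4 by field_simp; ring]; ring
    · ring
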